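/- arXiv:2310.10616 — 4 statements merged into one kernel-verified Lean document; each statement's English description precedes it below -/
import Mathlib

section
/- For any d, N ≥ 1 and any D_hid ≥ d + 9, there exists a masked attention layer with a single head, parameterized by matrices Q, K, V ∈ ℝ^{D_hid×D_hid}, such that for every input H ∈ ℝ^{D_hid×2N} of the supervised input format, the output Attn(H) has column 2i−1 equal to [x_i; 0; p^x_i] and column 2i equal to [x_i; y_i; p^y_i] for all i ∈ [N]; that is, the layer copies each x_i into the first d coordinates of the succeeding y-token and leaves all other entries unchanged. -/
open scoped BigOperators Matrix

noncomputable section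

/-- The ReLU activation. -/
def relu (t : ℝ) : ℝ := max t 0

/-- Entrywise ReLU on vectors. -/
def reluV {n : ℕ} (v : Fin n → ℝ) : Fin n → ℝ := fun i => relu (v i)

/-- Leaky ReLU with slope `ρ`. -/
def lrelu (ρ t : ℝ) : ℝ := max t (ρ * t)

/-- Entrywise leaky ReLU. -/
def lreluV (ρ : ℝ) {n : ℕ} (v : Fin n → ℝ) : Fin n → ℝ := fun i => lrelu ρ (v i)

/-- Euclidean (ℓ2) norm of a vector in `ℝ^n`. -/
def l2norm {n : ℕ} (v : Fin n → ℝ) : ℝ := Real.sqrt (∑ i, (v i) ^ 2)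

/-- An attention head: (query, key, value) matrices. -/
structure AttnHead (Dhid : ℕ) where
  Q : Matrix (Fin Dhid) (Fin Dhid) ℝ
  K : Matrix (Fin Dhid) (Fin Dhid) ℝ
  V : Matrix (Fin Dhid) (Fin Dhid) ℝ

/-- Masked attention layer with the normalized-ReLU activation.  Tokens are the
columns `H i`, indexed 0-based (math index `i+1`), so the normalization is
`1/(i+1)` and keys range over `j ≤ i`. -/
def attnLayer {Dhid Mh : ℕ} (heads : Fin Mh → AttnHead Dhid) {M : ℕ}
    (H : Fin M → Fin Dhid → ℝ) : Fin M → Fin Dhid → ℝ := fun i =>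
  H i + ∑ m : Fin Mh, (1 / (((i : ℕ) : ℝ) + 1)) •
    ∑ j ∈ Finset.Iic i,
      relu (((heads m).Q *ᵥ H i) ⬝ᵥ ((heads m).K *ᵥ H j)) • ((heads m).V *ᵥ H j)

/-- MLP layer with residual connection. -/
def mlpLayer {Dhid : ℕ} (W1 W2 : Matrix (Fin Dhid) (Fin Dhid) ℝ) {M : ℕ}
    (H : Fin M → Fin Dhid → ℝ) : Fin M → Fin Dhid → ℝ := fun i =>
  H i + W2 *ᵥ reluV (W1 *ᵥ H i)

/-- One transformer block: a masked attention layer followed by an MLP layer. -/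
structure TFLayer (Dhid : ℕ) where
  Mh : ℕ
  heads : Fin Mh → AttnHead Dhid
  W1 : Matrix (Fin Dhid) (Fin Dhid) ℝ
  W2 : Matrix (Fin Dhid) (Fin Dhid) ℝ

/-- Apply one transformer block. -/
def TFLayer.apply {Dhid : ℕ} (l : TFLayer Dhid) {M : ℕ}
    (H : Fin M → Fin Dhid → ℝ) : Fin M → Fin Dhid → ℝ :=
  mlpLayer l.W1 l.W2 (attnLayer l.heads H)

/-- A decoder transformer: the composition of its blocks. -/
def tfApply {Dhid : ℕ} (layers : List (TFLayer Dhid)) {M : ℕ}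
    (H : Fin M → Fin Dhid → ℝ) : Fin M → Fin Dhid → ℝ :=
  layers.foldl (fun G l => TFLayer.apply l G) H

/-- The vector in `ℝ^Dhid` whose last `m` coordinates are given by `a` and whose
remaining coordinates vanish (zero padding). -/
def tailVec (Dhid : ℕ) {m : ℕ} (a : Fin m → ℝ) : Fin Dhid → ℝ := fun r =>
  if _ : Dhid ≤ (r : ℕ) + m then
    if h2 : (r : ℕ) + m - Dhid < m then a ⟨(r : ℕ) + m - Dhid, h2⟩ else 0
  else 0

/-- The positional encoding `p^x_i` (1-based math index `i`):
zero padding followed by `[1; 2i-1; (2i-1)²; (2i-1)³; i; i²; 1; i]`. -/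
def posXvec (Dhid : ℕ) (i : ℕ) : Fin Dhid → ℝ :=
  tailVec Dhid
    ![1, 2*(i:ℝ)-1, (2*(i:ℝ)-1)^2, (2*(i:ℝ)-1)^3, (i:ℝ), (i:ℝ)^2, 1, (i:ℝ)]

/-- The positional encoding `p^y_i`:
zero padding followed by `[1; 2i; (2i)²; (2i)³; i; i²; 0; 0]`. -/
def posYvec (Dhid : ℕ) (i : ℕ) : Fin Dhid → ℝ :=
  tailVec Dhid ![1, 2*(i:ℝ), (2*(i:ℝ))^2, (2*(i:ℝ))^3, (i:ℝ), (i:ℝ)^2, 0, 0]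

/-- Supervised token format with value block of width `D`: for 0-based example
index `i = t/2`, the x-token (even `t`) is `[zx i; 0; p^x_{i+1}]` and the
y-token (odd `t`) is `[zy i; y i; p^y_{i+1}]`. -/
def supFormat (Dhid D N : ℕ) (zx zy : ℕ → Fin D → ℝ) (y : ℕ → ℝ) :
    Fin (2*N) → Fin Dhid → ℝ := fun t r =>
  if h : (r : ℕ) < D then
    (if (t : ℕ) % 2 = 0 then zx ((t : ℕ)/2) ⟨(r : ℕ), h⟩ else zy ((t : ℕ)/2) ⟨(r : ℕ), h⟩)
  else if (r : ℕ) = D then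
    (if (t : ℕ) % 2 = 0 then 0 else y ((t : ℕ)/2))
  else if (t : ℕ) % 2 = 0 then posXvec Dhid ((t : ℕ)/2 + 1) r
  else posYvec Dhid ((t : ℕ)/2 + 1) r

/-- The supervised input format: `h_{2i-1} = [x_i; 0; p^x_i]`,
`h_{2i} = [0_d; y_i; p^y_i]`. -/
def supInput (Dhid d N : ℕ) (x : ℕ → Fin d → ℝ) (y : ℕ → ℝ) :
    Fin (2*N) → Fin Dhid → ℝ :=
  supFormat Dhid d N x (fun _ _ => 0) y

/-- The `(Bs.length + 1)`-layer leaky-ReLU MLP representation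
`Φ(v) = σ_ρ(B_L ⋯ σ_ρ(B_1 v) ⋯)`. -/
def mlpRep (ρ : ℝ) {din D : ℕ} (B1 : Matrix (Fin D) (Fin din) ℝ)
    (Bs : List (Matrix (Fin D) (Fin D) ℝ)) (v : Fin din → ℝ) : Fin D → ℝ :=
  Bs.foldl (fun u B => lreluV ρ (B *ᵥ u)) (lreluV ρ (B1 *ᵥ v))

/-- Ridge empirical risk over the first `n` samples
(equal to `λ/2 ‖w‖²` for `n = 0`, matching the convention `L̂_0 := 0`). -/
def ridgeLoss (lam : ℝ) {D : ℕ} (n : ℕ) (x : ℕ → Fin D → ℝ) (y : ℕ → ℝ)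
    (w : Fin D → ℝ) : ℝ :=
  (1/(2*(n:ℝ))) * ∑ j ∈ Finset.range n, (w ⬝ᵥ x j - y j)^2 + lam/2 * ∑ r, (w r)^2


/-!
The head lets the `y`-token of the `n`-th example attend to the `x`-token of the same example
only.  Its score is `[query is a y-token] · [key is an x-token] · (2n - C (n - n'))`, where `n'`
is the example index of the key; with `C = 2N` this is `2n` (the number of tokens seen so far)
for `n' = n` and nonpositive for `n' < n`, so after the ReLU and the `1/(2n)` normalisation the
value matrix, which keeps the first `d` coordinates, adds exactly `x_n` to the `y`-token.
-/

open Matrix Finset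

lemma relu_of_nonpos {t : ℝ} (h : t ≤ 0) : relu t = 0 := max_eq_right h

lemma relu_of_nonneg {t : ℝ} (h : 0 ≤ t) : relu t = t := max_eq_left h

def AttnHead.score {Dhid : ℕ} (head : AttnHead Dhid) (u v : Fin Dhid → ℝ) : ℝ :=
  (head.Q *ᵥ u) ⬝ᵥ (head.K *ᵥ v)

section SingleHead

variable {Dhid M : ℕ} (head : AttnHead Dhid) (H : Fin M → Fin Dhid → ℝ) (i : Fin M)

lemma attnLayer_single_apply :
    attnLayer (fun _ : Fin 1 => head) H i = H i + (1 / (((i : ℕ) : ℝ) + 1)) •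
      ∑ j ∈ Iic i, relu (head.score (H i) (H j)) • (head.V *ᵥ H j) := by
  simp [attnLayer, AttnHead.score]

lemma attnLayer_single_apply_eq_self (h : ∀ j ≤ i, relu (head.score (H i) (H j)) = 0) :
    attnLayer (fun _ : Fin 1 => head) H i = H i := by
  rw [attnLayer_single_apply, sum_eq_zero fun j hj => by rw [h j (mem_Iic.mp hj), zero_smul],
    smul_zero, add_zero]

lemma attnLayer_single_apply_eq_add_of_attends (j₀ : Fin M) (hj₀ : j₀ ≤ i)
    (hw : relu (head.score (H i) (H j₀)) = (i : ℕ) + 1)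
    (hz : ∀ j ≤ i, j ≠ j₀ → relu (head.score (H i) (H j)) = 0) :
    attnLayer (fun _ : Fin 1 => head) H i = H i + head.V *ᵥ H j₀ := by
  rw [attnLayer_single_apply, sum_eq_single_of_mem j₀ (mem_Iic.mpr hj₀)
    fun j hj hne => by rw [hz j (mem_Iic.mp hj) hne, zero_smul], hw, smul_smul,
    one_div_mul_cancel (by positivity), one_smul]

end SingleHead

def tailIdx {Dhid m : ℕ} (h : m ≤ Dhid) (s : Fin m) : Fin Dhid :=
  ⟨Dhid - m + s, by omega⟩

lemma tailVec_apply_tailIdx {Dhid m : ℕ} (h : m ≤ Dhid) (a : Fin m → ℝ) (s : Fin m) :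
    tailVec Dhid a (tailIdx h s) = a s := by
  have hs : (tailIdx h s : ℕ) + m - Dhid = s := by simp only [tailIdx]; omega
  rw [tailVec, dif_pos (by simp only [tailIdx]; omega), dif_pos (hs ▸ s.isLt)]
  exact congrArg a (Fin.ext hs)

lemma supFormat_apply_of_lt {Dhid D N : ℕ} (zx zy : ℕ → Fin D → ℝ) (y : ℕ → ℝ)
    (t : Fin (2 * N)) {r : Fin Dhid} (hr : D < r) :
    supFormat Dhid D N zx zy y t r =
      if (t : ℕ) % 2 = 0 then posXvec Dhid ((t : ℕ) / 2 + 1) r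
      else posYvec Dhid ((t : ℕ) / 2 + 1) r := by
  rw [supFormat, dif_neg (by omega), if_neg (by omega)]

/-- Coordinates `0, 4, 6, 7` of the positional block hold `1`, `n`, `[x-token]` and
`[x-token] · n`. -/
def copyHead {Dhid : ℕ} (d : ℕ) (h8 : 8 ≤ Dhid) (C : ℝ) : AttnHead Dhid where
  Q := 1
  K := vecMulVec (Pi.single (tailIdx h8 0) 1 - Pi.single (tailIdx h8 6) 1)
        (C • Pi.single (tailIdx h8 7) 1) +
      vecMulVec (Pi.single (tailIdx h8 4) 1 - Pi.single (tailIdx h8 7) 1)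
        ((2 - C) • Pi.single (tailIdx h8 6) 1)
  V := diagonal fun r => if (r : ℕ) < d then 1 else 0

lemma copyHead_score {Dhid : ℕ} (d : ℕ) (h8 : 8 ≤ Dhid) (C : ℝ) (u v : Fin Dhid → ℝ) :
    (copyHead d h8 C).score u v =
      (u (tailIdx h8 0) - u (tailIdx h8 6)) * (C * v (tailIdx h8 7)) +
      (u (tailIdx h8 4) - u (tailIdx h8 7)) * ((2 - C) * v (tailIdx h8 6)) := by
  simp only [AttnHead.score, copyHead, one_mulVec, add_mulVec, vecMulVec_mulVec, dotProduct_add,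
    op_smul_eq_smul, dotProduct_smul, dotProduct_sub, dotProduct_single_one, smul_eq_mul,
    smul_dotProduct, single_one_dotProduct]
  ring

lemma copyHead_score_supFormat {Dhid d N : ℕ} (hD : d + 9 ≤ Dhid) (h8 : 8 ≤ Dhid) (C : ℝ)
    (zx zy : ℕ → Fin d → ℝ) (y : ℕ → ℝ) (t j : Fin (2 * N)) :
    (copyHead d h8 C).score (supFormat Dhid d N zx zy y t) (supFormat Dhid d N zx zy y j) =
      if (t : ℕ) % 2 = 1 ∧ (j : ℕ) % 2 = 0 then
        2 * ((((t : ℕ) / 2 : ℕ) : ℝ) + 1) - C * ((((t : ℕ) / 2 : ℕ) : ℝ) - (((j : ℕ) / 2 : ℕ) : ℝ))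
      else 0 := by
  have hd_lt (s : Fin 8) : d < (tailIdx h8 s : ℕ) := by simp only [tailIdx]; omega
  simp only [copyHead_score, supFormat_apply_of_lt _ _ _ _ (hd_lt _), posXvec, posYvec,
    tailVec_apply_tailIdx]
  rcases Nat.mod_two_eq_zero_or_one t with ht | ht <;>
    rcases Nat.mod_two_eq_zero_or_one j with hj | hj <;>
    simp [ht, hj]
  ring

lemma relu_copyHead_score_supFormat {Dhid d N : ℕ} (hD : d + 9 ≤ Dhid) (h8 : 8 ≤ Dhid)
    (zx zy : ℕ → Fin d → ℝ) (y : ℕ → ℝ) {t j : Fin (2 * N)} (hjt : j ≤ t) :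
    relu ((copyHead d h8 (2 * N)).score (supFormat Dhid d N zx zy y t)
        (supFormat Dhid d N zx zy y j)) =
      if (t : ℕ) % 2 = 1 ∧ (j : ℕ) = t - 1 then ((t : ℕ) : ℝ) + 1 else 0 := by
  have hjt' : (j : ℕ) ≤ t := hjt
  have htN := t.isLt
  rw [copyHead_score_supFormat hD]
  split_ifs with hs hsel hsel
  · obtain ⟨ht, hj⟩ := hsel
    have hdiv : (j : ℕ) / 2 = (t : ℕ) / 2 := by omega
    have htwo : ((t : ℕ) : ℝ) + 1 = 2 * ((((t : ℕ) / 2 : ℕ) : ℝ) + 1) := by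
      have : (t : ℕ) = 2 * ((t : ℕ) / 2) + 1 := by omega
      nth_rw 1 [this]
      push_cast
      ring
    rw [hdiv, sub_self, mul_zero, sub_zero, htwo]
    exact relu_of_nonneg (by positivity)
  · apply relu_of_nonpos
    have hj : (j : ℕ) / 2 + 1 ≤ (t : ℕ) / 2 := by omega
    have ht : (t : ℕ) / 2 + 1 ≤ N := by omega
    have hj' : ((((j : ℕ) / 2 : ℕ) : ℝ)) + 1 ≤ (((t : ℕ) / 2 : ℕ) : ℝ) := by exact_mod_cast hj
    have ht' : (((t : ℕ) / 2 : ℕ) : ℝ) + 1 ≤ N := by exact_mod_cast ht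
    nlinarith
  · omega
  · exact relu_of_nonpos le_rfl

lemma supFormat_eq_of_even {Dhid D N : ℕ} (zx zy zy' : ℕ → Fin D → ℝ) (y : ℕ → ℝ)
    {t : Fin (2 * N)} (ht : (t : ℕ) % 2 = 0) :
    supFormat Dhid D N zx zy y t = supFormat Dhid D N zx zy' y t := by
  funext r
  simp [supFormat, ht]

lemma supInput_add_copyHead_V {Dhid d N : ℕ} (h8 : 8 ≤ Dhid) (C : ℝ) (x : ℕ → Fin d → ℝ)
    (y : ℕ → ℝ) {t j : Fin (2 * N)} (ht : (t : ℕ) % 2 = 1) (hj : (j : ℕ) = t - 1) :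
    supInput Dhid d N x y t + (copyHead d h8 C).V *ᵥ supInput Dhid d N x y j =
      supFormat Dhid d N x x y t := by
  have hj2 : (j : ℕ) % 2 = 0 := by omega
  have hdiv : (j : ℕ) / 2 = (t : ℕ) / 2 := by omega
  funext r
  by_cases hr : (r : ℕ) < d <;>
    simp [supInput, supFormat, copyHead, mulVec_diagonal, hr, ht, hj2, hdiv]

theorem copy_by_single_attention_head_general (d N Dhid : ℕ)
    (hDhid : d + 9 ≤ Dhid) :
    ∃ head : AttnHead Dhid,
      ∀ (x : ℕ → Fin d → ℝ) (y : ℕ → ℝ),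
        attnLayer (fun _ : Fin 1 => head) (supInput Dhid d N x y)
          = supFormat Dhid d N x x y := by
  have h8 : 8 ≤ Dhid := by omega
  refine ⟨copyHead d h8 (2 * N), fun x y => funext fun t => ?_⟩
  have hrelu {j : Fin (2 * N)} (hjt : j ≤ t) :=
    relu_copyHead_score_supFormat hDhid h8 x (fun _ _ => 0) y hjt
  rcases Nat.mod_two_eq_zero_or_one t with ht | ht
  · rw [attnLayer_single_apply_eq_self _ _ _ fun j hjt => by simp [supInput, hrelu hjt, ht]]
    exact supFormat_eq_of_even _ _ _ _ ht
  · let j₀ : Fin (2 * N) := ⟨t - 1, by omega⟩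
    have hj₀t : j₀ ≤ t := Fin.le_def.mpr (Nat.sub_le _ _)
    rw [attnLayer_single_apply_eq_add_of_attends _ _ _ j₀ hj₀t
      (by simpa [supInput, ht, j₀] using hrelu hj₀t) fun j hjt hne => by
        have hj : (j : ℕ) ≠ t - 1 := fun h => hne (Fin.ext h)
        simpa [supInput, ht, hj] using hrelu hjt]
    exact supInput_add_copyHead_V h8 _ x y ht rfl

/-- **Copying by a single attention head.**
For any `d, N ≥ 1` and `D_hid ≥ d + 9`, there is a single-head masked attention
layer which, on any input of the supervised format, copies each `x_i` into the
succeeding `y`-token and leaves all other entries unchanged: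
the output has columns `h_{2i-1} = [x_i; 0; p^x_i]`, `h_{2i} = [x_i; y_i; p^y_i]`. -/
theorem copy_by_single_attention_head (d N Dhid : ℕ)
    (hd : 1 ≤ d) (hN : 1 ≤ N) (hDhid : d + 9 ≤ Dhid) :
    ∃ head : AttnHead Dhid,
      ∀ (x : ℕ → Fin d → ℝ) (y : ℕ → ℝ),
        attnLayer (fun _ : Fin 1 => head) (supInput Dhid d N x y)
          = supFormat Dhid d N x x y :=
  copy_by_single_attention_head_general d N Dhid hDhid

end
end

section
/- Let Φ* be an L-layer leaky-ReLU MLP representation with hidden dimension D, and suppose D_hid ≥ max{2D, D + d + 10}. Then there exists a decoder transformer with L+1 layers and at most 5 heads per attention layer that exactly implements Φ* token-wise: for every N and every input H ∈ ℝ^{D_hid×2N} of the supervised input format, TF(H) has column 2i−1 equal to [Φ*(x_i); 0; p̃^x_i] and column 2i equal to [0_D; y_i; p̃^y_i] for all i ∈ [N], where p̃^x_i, p̃^y_i differ from p^x_i, p^y_i only in the dimension of their zero paddings. -/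
open scoped BigOperators Matrix

noncomputable section

/-!
Each attention layer has a single head with identity query and a key that reads only the
positional coordinates, chosen so that the score of token `t` against an earlier token `j` is
`(t+1)(j+1-t)` (for `xKey`, times the indicator that `j` is an x-token). The ReLU kills every
`j < t`, and at `j = t` the score cancels the normalisation `1/(t+1)`, so the head acts on each
token separately as `h ↦ h + V h`. An MLP layer with `W₁ = -P`, `W₂ = (1-ρ)P`, where `P` projects
onto the first `D` coordinates, applies `σ_ρ(v) = v + (1-ρ) relu(-v)` there.
The first block moves each label `y_i` from row `d` to row `D`, the second replaces `x_i` by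
`σ_ρ(B₁ x_i)` on the x-tokens only, and each further block applies `u ↦ σ_ρ(B u)` for one of
`B₂, …, B_L`.
-/

namespace TransformerMLP

lemma relu_of_nonpos {t : ℝ} (h : t ≤ 0) : relu t = 0 := max_eq_right h

lemma relu_of_nonneg {t : ℝ} (h : 0 ≤ t) : relu t = t := max_eq_left h

lemma lrelu_eq_add_relu_neg {ρ : ℝ} (hρ : ρ ≤ 1) (v : ℝ) :
    lrelu ρ v = v + (1 - ρ) * relu (-v) := by
  rcases le_total v 0 with h | h
  · rw [relu_of_nonneg (by linarith), lrelu, max_eq_right (by nlinarith)]; ring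
  · rw [relu_of_nonpos (by linarith), lrelu, max_eq_left (by nlinarith)]; ring

/-- The matrix unit `E_{ab}` with natural-number indices, so that no bound proofs are needed;
it is `0` when an index is out of range. -/
def natSingle (n a b : ℕ) : Matrix (Fin n) (Fin n) ℝ :=
  Matrix.of fun i j => if (i : ℕ) = a ∧ (j : ℕ) = b then 1 else 0

lemma sum_ite_val_eq {n b : ℕ} (hb : b < n) (f : Fin n → ℝ) :
    ∑ i : Fin n, (if (i : ℕ) = b then f i else 0) = f ⟨b, hb⟩ := by
  rw [Finset.sum_eq_single ⟨b, hb⟩] <;> simp_all [Fin.ext_iff]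

lemma natSingle_mulVec {n a b : ℕ} (hb : b < n) (v : Fin n → ℝ) (i : Fin n) :
    (natSingle n a b *ᵥ v) i = if (i : ℕ) = a then v ⟨b, hb⟩ else 0 := by
  simp only [natSingle, Matrix.mulVec, dotProduct, Matrix.of_apply, ite_mul, one_mul, zero_mul]
  split_ifs with hi
  · simpa [hi] using sum_ite_val_eq hb v
  · simp [hi]

lemma dotProduct_natSingle_mulVec {n a b : ℕ} (ha : a < n) (hb : b < n) (u v : Fin n → ℝ) :
    u ⬝ᵥ (natSingle n a b *ᵥ v) = u ⟨a, ha⟩ * v ⟨b, hb⟩ := by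
  simp [dotProduct, natSingle_mulVec hb, sum_ite_val_eq ha]

def projLt (n m : ℕ) : Matrix (Fin n) (Fin n) ℝ :=
  Matrix.diagonal fun i => if (i : ℕ) < m then 1 else 0

lemma projLt_mulVec {n m : ℕ} (v : Fin n → ℝ) (i : Fin n) :
    (projLt n m *ᵥ v) i = if (i : ℕ) < m then v i else 0 := by
  simp [projLt, Matrix.mulVec_diagonal]

def blockEmbed (n : ℕ) {D d : ℕ} (B : Matrix (Fin D) (Fin d) ℝ) : Matrix (Fin n) (Fin n) ℝ :=
  Matrix.of fun i j => if h : (i : ℕ) < D ∧ (j : ℕ) < d then B ⟨i, h.1⟩ ⟨j, h.2⟩ else 0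

lemma blockEmbed_mulVec {n D d : ℕ} (hd : d ≤ n) (B : Matrix (Fin D) (Fin d) ℝ)
    (v : Fin n → ℝ) (i : Fin n) :
    (blockEmbed n B *ᵥ v) i =
      if h : (i : ℕ) < D then (B *ᵥ fun j => v (Fin.castLE hd j)) ⟨i, h⟩ else 0 := by
  split_ifs with h
  · refine (Fintype.sum_of_injective _ (Fin.castLE_injective hd) _ _ (fun j hj => ?_)
      (fun j => ?_)).symm
    · have : ¬ (j : ℕ) < d := fun hj' => hj ⟨⟨j, hj'⟩, rfl⟩
      simp [blockEmbed, this]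
    · simp [blockEmbed, h]
  · simp [blockEmbed, Matrix.mulVec, dotProduct, h]

lemma attnLayer_singleton_of_score {Dhid M : ℕ} (a : AttnHead Dhid) (H : Fin M → Fin Dhid → ℝ)
    (t : Fin M) (g : Fin M → ℝ) (hg : ∀ j, 0 ≤ g j)
    (hscore : ∀ j ≤ t, (a.Q *ᵥ H t) ⬝ᵥ (a.K *ᵥ H j) = ((t : ℕ) + 1) * ((j : ℕ) + 1 - t) * g j) :
    attnLayer ![a] H t = H t + g t • (a.V *ᵥ H t) := by
  have ht : (0 : ℝ) < (t : ℕ) + 1 := by positivity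
  have hsum : ∑ j ∈ Finset.Iic t, relu ((a.Q *ᵥ H t) ⬝ᵥ (a.K *ᵥ H j)) • (a.V *ᵥ H j)
      = (((t : ℕ) + 1) * g t) • (a.V *ᵥ H t) := by
    rw [Finset.sum_eq_single_of_mem t (Finset.mem_Iic.2 le_rfl)]
    · rw [hscore t le_rfl, add_sub_cancel_left, mul_one, relu_of_nonneg (mul_nonneg ht.le (hg t))]
    · intro j hj hjt
      have hlt : ((j : ℕ) : ℝ) + 1 ≤ (t : ℕ) := by
        exact_mod_cast (lt_of_le_of_ne (Finset.mem_Iic.1 hj) hjt : j < t)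
      rw [hscore j (Finset.mem_Iic.1 hj), relu_of_nonpos, zero_smul]
      exact mul_nonpos_of_nonpos_of_nonneg
        (mul_nonpos_of_nonneg_of_nonpos ht.le (by linarith)) (hg j)
  simp only [attnLayer, Fin.sum_univ_one, Matrix.cons_val_zero, hsum, smul_smul]
  congr 2
  field_simp

/-- The positional encoding of the token with 0-based index `t`. -/
def posVec (n : ℕ) (t : ℕ) : Fin n → ℝ :=
  if t % 2 = 0 then posXvec n (t / 2 + 1) else posYvec n (t / 2 + 1)

def HasPosEnc {n M : ℕ} (H : Fin M → Fin n → ℝ) : Prop :=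
  ∀ (t : Fin M) (r : Fin n), n - 8 ≤ (r : ℕ) → H t r = posVec n t r

def posCoord (n : ℕ) (k : Fin 8) : ℕ := n - 8 + k

lemma posCoord_lt {n : ℕ} (hn : 8 ≤ n) (k : Fin 8) : posCoord n k < n := by
  unfold posCoord; omega

lemma tailVec_apply_posCoord {n : ℕ} (hn : 8 ≤ n) (a : Fin 8 → ℝ) (k : Fin 8) :
    tailVec n a ⟨posCoord n k, posCoord_lt hn k⟩ = a k := by
  unfold tailVec posCoord
  rw [dif_pos (by simp; omega), dif_pos (by simp; omega)]
  congr 1; ext; simp; omega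

lemma tailVec_of_lt {n m : ℕ} (a : Fin m → ℝ) {r : Fin n} (h : (r : ℕ) + m < n) :
    tailVec n a r = 0 :=
  dif_neg (by omega)

lemma posXvec_of_lt {n : ℕ} (i : ℕ) {r : Fin n} (h : (r : ℕ) + 8 < n) : posXvec n i r = 0 :=
  tailVec_of_lt _ h

lemma posYvec_of_lt {n : ℕ} (i : ℕ) {r : Fin n} (h : (r : ℕ) + 8 < n) : posYvec n i r = 0 :=
  tailVec_of_lt _ h

section PosVec

variable {n : ℕ} (hn : 8 ≤ n) (t : ℕ)
include hn

lemma posVec_coord_zero : posVec n t ⟨posCoord n 0, posCoord_lt hn 0⟩ = 1 := by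
  unfold posVec; split_ifs <;> simp [posXvec, posYvec, tailVec_apply_posCoord hn]

lemma posVec_coord_one : posVec n t ⟨posCoord n 1, posCoord_lt hn 1⟩ = t + 1 := by
  obtain ⟨s, rfl | rfl⟩ := Nat.even_or_odd' t <;>
    simp [posVec, posXvec, posYvec, tailVec_apply_posCoord hn, Nat.mul_add_div] <;> ring

lemma posVec_coord_two : posVec n t ⟨posCoord n 2, posCoord_lt hn 2⟩ = (t + 1) ^ 2 := by
  obtain ⟨s, rfl | rfl⟩ := Nat.even_or_odd' t <;>
    simp [posVec, posXvec, posYvec, tailVec_apply_posCoord hn, Nat.mul_add_div] <;> ring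

lemma posVec_coord_six :
    posVec n t ⟨posCoord n 6, posCoord_lt hn 6⟩ = if t % 2 = 0 then 1 else 0 := by
  unfold posVec; split_ifs <;> simp [posXvec, posYvec, tailVec_apply_posCoord hn]

lemma posVec_coord_seven :
    posVec n t ⟨posCoord n 7, posCoord_lt hn 7⟩
      = if t % 2 = 0 then ((t / 2 + 1 : ℕ) : ℝ) else 0 := by
  unfold posVec; split_ifs <;> simp [posXvec, posYvec, tailVec_apply_posCoord hn]

end PosVec

lemma HasPosEnc.apply_posCoord {n M : ℕ} (hn : 8 ≤ n) {H : Fin M → Fin n → ℝ} (hH : HasPosEnc H)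
    (t : Fin M) (k : Fin 8) :
    H t ⟨posCoord n k, posCoord_lt hn k⟩ = posVec n t ⟨posCoord n k, posCoord_lt hn k⟩ :=
  hH t _ (by simp [posCoord])

def selfKey (n : ℕ) : Matrix (Fin n) (Fin n) ℝ :=
  natSingle n (posCoord n 1) (posCoord n 1) + natSingle n (posCoord n 1) (posCoord n 0)
    - natSingle n (posCoord n 2) (posCoord n 0)

def xKey (n : ℕ) : Matrix (Fin n) (Fin n) ℝ :=
  (2 : ℝ) • natSingle n (posCoord n 1) (posCoord n 7) - natSingle n (posCoord n 2) (posCoord n 6)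

section Attention

variable {n M : ℕ} (hn : 8 ≤ n) {H : Fin M → Fin n → ℝ} (hH : HasPosEnc H)
include hn hH

lemma dotProduct_selfKey_mulVec (t j : Fin M) :
    H t ⬝ᵥ (selfKey n *ᵥ H j) = ((t : ℕ) + 1) * ((j : ℕ) + 1 - t) := by
  simp only [selfKey, Matrix.sub_mulVec, Matrix.add_mulVec, dotProduct_sub, dotProduct_add,
    dotProduct_natSingle_mulVec (posCoord_lt hn _) (posCoord_lt hn _),
    hH.apply_posCoord hn, posVec_coord_zero hn, posVec_coord_one hn, posVec_coord_two hn]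
  ring

lemma dotProduct_xKey_mulVec (t j : Fin M) :
    H t ⬝ᵥ (xKey n *ᵥ H j)
      = ((t : ℕ) + 1) * ((j : ℕ) + 1 - t) * (if (j : ℕ) % 2 = 0 then 1 else 0) := by
  simp only [xKey, Matrix.sub_mulVec, Matrix.smul_mulVec, dotProduct_sub, dotProduct_smul,
    dotProduct_natSingle_mulVec (posCoord_lt hn _) (posCoord_lt hn _), smul_eq_mul,
    hH.apply_posCoord hn, posVec_coord_one hn, posVec_coord_two hn, posVec_coord_six hn,
    posVec_coord_seven hn]
  split_ifs with hj
  · obtain ⟨s, hs⟩ : ∃ s, (j : ℕ) = 2 * s := ⟨(j : ℕ) / 2, by omega⟩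
    rw [hs, Nat.mul_div_cancel_left s two_pos]
    push_cast; ring
  · ring

lemma attnLayer_selfKey (V : Matrix (Fin n) (Fin n) ℝ) (t : Fin M) :
    attnLayer ![⟨1, selfKey n, V⟩] H t = H t + V *ᵥ H t := by
  rw [attnLayer_singleton_of_score _ H t (fun _ => 1) (fun _ => zero_le_one), one_smul]
  intro j _
  simpa using dotProduct_selfKey_mulVec hn hH t j

lemma attnLayer_xKey (V : Matrix (Fin n) (Fin n) ℝ) (t : Fin M) :
    attnLayer ![⟨1, xKey n, V⟩] H t
      = H t + (if (t : ℕ) % 2 = 0 then 1 else 0 : ℝ) • (V *ᵥ H t) := by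
  refine attnLayer_singleton_of_score _ H t (fun j => if (j : ℕ) % 2 = 0 then 1 else 0)
    (fun j => by split_ifs <;> norm_num) fun j _ => ?_
  simpa using dotProduct_xKey_mulVec hn hH t j

end Attention

lemma mlpLayer_zero {n M : ℕ} (H : Fin M → Fin n → ℝ) : mlpLayer 0 0 H = H := by
  ext t r; simp [mlpLayer]

lemma mlpLayer_lrelu {n M D : ℕ} {ρ : ℝ} (hρ : ρ ≤ 1) (H : Fin M → Fin n → ℝ) (t : Fin M)
    (r : Fin n) :
    mlpLayer (-projLt n D) ((1 - ρ) • projLt n D) H t r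
      = if (r : ℕ) < D then lrelu ρ (H t r) else H t r := by
  simp only [mlpLayer, Pi.add_apply, Matrix.smul_mulVec, Pi.smul_apply, projLt_mulVec, reluV,
    Matrix.neg_mulVec, Pi.neg_apply, smul_eq_mul]
  split_ifs <;> simp [lrelu_eq_add_relu_neg hρ]

def moveCoordLayer (n d D : ℕ) : TFLayer n :=
  ⟨1, ![⟨1, selfKey n, natSingle n D d - natSingle n d d⟩], 0, 0⟩

def lreluLayer (n : ℕ) (ρ : ℝ) {D : ℕ} (B : Matrix (Fin D) (Fin D) ℝ) : TFLayer n :=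
  ⟨1, ![⟨1, selfKey n, blockEmbed n B - projLt n D⟩], -projLt n D, (1 - ρ) • projLt n D⟩

def xLreluLayer (n : ℕ) (ρ : ℝ) {D d : ℕ} (B : Matrix (Fin D) (Fin d) ℝ) : TFLayer n :=
  ⟨1, ![⟨1, xKey n, blockEmbed n B - projLt n d⟩], -projLt n D, (1 - ρ) • projLt n D⟩

section Layers

variable {n M : ℕ} (hn : 8 ≤ n) {H : Fin M → Fin n → ℝ} (hH : HasPosEnc H) (t : Fin M) (r : Fin n)
include hn hH

lemma moveCoordLayer_apply {d : ℕ} (hd : d < n) (D : ℕ) :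
    (moveCoordLayer n d D).apply H t r
      = H t r + (if (r : ℕ) = D then H t ⟨d, hd⟩ else 0)
          - if (r : ℕ) = d then H t ⟨d, hd⟩ else 0 := by
  simp only [moveCoordLayer, TFLayer.apply, mlpLayer_zero, attnLayer_selfKey hn hH,
    Pi.add_apply, Matrix.sub_mulVec, Pi.sub_apply, natSingle_mulVec hd]
  ring

lemma lreluLayer_apply {ρ : ℝ} (hρ : ρ ≤ 1) {D : ℕ} (hD : D ≤ n) (B : Matrix (Fin D) (Fin D) ℝ) :
    (lreluLayer n ρ B).apply H t r
      = if h : (r : ℕ) < D then lrelu ρ ((B *ᵥ fun j => H t (Fin.castLE hD j)) ⟨r, h⟩)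
        else H t r := by
  simp only [lreluLayer, TFLayer.apply, mlpLayer_lrelu hρ, attnLayer_selfKey hn hH,
    Pi.add_apply, Matrix.sub_mulVec, Pi.sub_apply, blockEmbed_mulVec hD, projLt_mulVec]
  split_ifs <;> simp_all

lemma xLreluLayer_apply {ρ : ℝ} (hρ : ρ ≤ 1) {D d : ℕ} (hd : d ≤ n) (B : Matrix (Fin D) (Fin d) ℝ) :
    (xLreluLayer n ρ B).apply H t r
      = if (t : ℕ) % 2 = 0 then
          (if h : (r : ℕ) < D then
              lrelu ρ ((if (r : ℕ) < d then 0 else H t r)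
                + (B *ᵥ fun j => H t (Fin.castLE hd j)) ⟨r, h⟩)
            else if (r : ℕ) < d then 0 else H t r)
        else if (r : ℕ) < D then lrelu ρ (H t r) else H t r := by
  simp only [xLreluLayer, TFLayer.apply, mlpLayer_lrelu hρ, attnLayer_xKey hn hH,
    Pi.add_apply, Pi.smul_apply, Matrix.sub_mulVec, Pi.sub_apply, blockEmbed_mulVec hd,
    projLt_mulVec]
  split_ifs <;> simp_all

end Layers

lemma hasPosEnc_supFormat {n D N : ℕ} (h : D + 9 ≤ n) (zx zy : ℕ → Fin D → ℝ) (y : ℕ → ℝ) :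
    HasPosEnc (supFormat n D N zx zy y) := by
  intro t r hr
  simp only [supFormat, posVec, dif_neg (show ¬(r : ℕ) < D by omega),
    if_neg (show (r : ℕ) ≠ D by omega)]
  split_ifs <;> rfl

lemma HasPosEnc.apply_moveCoordLayer {n M d D : ℕ} {H : Fin M → Fin n → ℝ} (hH : HasPosEnc H)
    (hd : d + 9 ≤ n) (hD : D + 9 ≤ n) : HasPosEnc ((moveCoordLayer n d D).apply H) := by
  intro t r hr
  rw [TransformerMLP.moveCoordLayer_apply (by omega) hH t r (by omega), if_neg (by omega),
    if_neg (by omega), hH t r hr]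
  ring

lemma lreluLayer_apply_supFormat {n D N : ℕ} (h : D + 9 ≤ n) {ρ : ℝ} (hρ : ρ ≤ 1)
    (B : Matrix (Fin D) (Fin D) ℝ) (u : ℕ → Fin D → ℝ) (y : ℕ → ℝ) :
    (lreluLayer n ρ B).apply (supFormat n D N u (fun _ _ => 0) y)
      = supFormat n D N (fun i => lreluV ρ (B *ᵥ u i)) (fun _ _ => 0) y := by
  ext t r
  have hD : D ≤ n := by omega
  have htop : (fun j => supFormat n D N u (fun _ _ => 0) y t (Fin.castLE hD j))
      = if (t : ℕ) % 2 = 0 then u ((t : ℕ) / 2) else 0 := by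
    ext j; by_cases ht : (t : ℕ) % 2 = 0 <;> simp [supFormat, ht]
  rw [lreluLayer_apply (by omega) (hasPosEnc_supFormat h _ _ y) t r hρ hD, htop]
  by_cases ht : (t : ℕ) % 2 = 0 <;> by_cases hr : (r : ℕ) < D <;>
    simp [supFormat, lreluV, lrelu, ht, hr]

lemma xLreluLayer_moveCoordLayer_apply_supInput {n d D N : ℕ} (hd : d + 9 ≤ n) (hD : D + 9 ≤ n)
    {ρ : ℝ} (hρ : ρ ≤ 1) (B : Matrix (Fin D) (Fin d) ℝ) (x : ℕ → Fin d → ℝ) (y : ℕ → ℝ) :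
    (xLreluLayer n ρ B).apply ((moveCoordLayer n d D).apply (supInput n d N x y))
      = supFormat n D N (fun i => lreluV ρ (B *ᵥ x i)) (fun _ _ => 0) y := by
  have hX : HasPosEnc (supInput n d N x y) := hasPosEnc_supFormat hd _ _ y
  ext t r
  rw [xLreluLayer_apply (by omega) (hX.apply_moveCoordLayer hd hD) t r hρ (by omega)]
  simp only [moveCoordLayer_apply (by omega) hX t _ (show d < n by omega)]
  rcases Nat.mod_two_eq_zero_or_one t with ht | ht <;>
    simp only [supInput, supFormat, lreluV, ht] <;> split_ifs <;>
    first | omega | simp (disch := omega) [lrelu, posXvec_of_lt, posYvec_of_lt]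

lemma tfApply_map_lreluLayer_supFormat {n D N : ℕ} (h : D + 9 ≤ n) {ρ : ℝ} (hρ : ρ ≤ 1)
    (y : ℕ → ℝ) (Bs : List (Matrix (Fin D) (Fin D) ℝ)) (u : ℕ → Fin D → ℝ) :
    tfApply (Bs.map (lreluLayer n ρ)) (supFormat n D N u (fun _ _ => 0) y)
      = supFormat n D N (fun i => Bs.foldl (fun v B => lreluV ρ (B *ᵥ v)) (u i))
          (fun _ _ => 0) y := by
  induction Bs generalizing u with
  | nil => rfl
  | cons B Bs ih =>
    rw [List.map_cons, tfApply, List.foldl_cons, ← tfApply,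
      lreluLayer_apply_supFormat h hρ B u y, ih]
    rfl

end TransformerMLP

open TransformerMLP

theorem transformer_implements_mlp_representation_general (d D Dhid : ℕ) (ρ : ℝ)
    (hρ1 : ρ < 1)
    (B1 : Matrix (Fin D) (Fin d) ℝ) (Bs : List (Matrix (Fin D) (Fin D) ℝ))
    (hDhid : max (2 * D) (D + d + 10) ≤ Dhid) :
    ∃ layers : List (TFLayer Dhid),
      layers.length = Bs.length + 2 ∧
      (∀ l ∈ layers, l.Mh ≤ 5) ∧
      ∀ (N : ℕ) (x : ℕ → Fin d → ℝ) (y : ℕ → ℝ),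
        tfApply layers (supInput Dhid d N x y)
          = supFormat Dhid D N (fun i => mlpRep ρ B1 Bs (x i)) (fun _ _ => 0) y := by
  have hd : d + 9 ≤ Dhid := by omega
  have hD : D + 9 ≤ Dhid := by omega
  refine ⟨moveCoordLayer Dhid d D :: xLreluLayer Dhid ρ B1 :: Bs.map (lreluLayer Dhid ρ),
    by simp, ?_, fun N x y => ?_⟩
  · simp [moveCoordLayer, xLreluLayer, lreluLayer]
  · change tfApply _ ((xLreluLayer Dhid ρ B1).apply ((moveCoordLayer Dhid d D).apply _)) = _
    rw [xLreluLayer_moveCoordLayer_apply_supInput hd hD hρ1.le,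
      tfApply_map_lreluLayer_supFormat hD hρ1.le]
    rfl

/-- **Implementing the MLP representation by a transformer (Lemma `mlp`).**
Let `Φ*` be the `L`-layer leaky-ReLU MLP representation with matrices
`B₁ ∈ ℝ^{D×d}` and `B₂, …, B_L ∈ ℝ^{D×D}` (here `L = Bs.length + 1`), and
suppose `D_hid ≥ max{2D, D + d + 10}`.  Then there is an `(L+1)`-layer decoder
transformer with at most `5` heads per attention layer that implements `Φ*`
token-wise: on every supervised-format input it outputs columns
`[Φ*(x_i); 0; p̃^x_i]` and `[0_D; y_i; p̃^y_i]`. -/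
theorem transformer_implements_mlp_representation (d D Dhid : ℕ) (ρ : ℝ)
    (hρ0 : 0 < ρ) (hρ1 : ρ < 1)
    (B1 : Matrix (Fin D) (Fin d) ℝ) (Bs : List (Matrix (Fin D) (Fin D) ℝ))
    (hDhid : max (2 * D) (D + d + 10) ≤ Dhid) :
    ∃ layers : List (TFLayer Dhid),
      layers.length = Bs.length + 2 ∧
      (∀ l ∈ layers, l.Mh ≤ 5) ∧
      ∀ (N : ℕ) (x : ℕ → Fin d → ℝ) (y : ℕ → ℝ),
        tfApply layers (supInput Dhid d N x y)
          = supFormat Dhid D N (fun i => mlpRep ρ B1 Bs (x i)) (fun _ _ => 0) y :=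
  transformer_implements_mlp_representation_general d D Dhid ρ hρ1 B1 Bs hDhid

end
end

section
/- For any η > 0, λ ≥ 0, B_x, B_w, B_y > 0 and D_hid ≥ 2d + 10, there exists a masked attention layer with 3 heads such that the following holds: for any N and any input H ∈ ℝ^{D_hid×2N} with columns h_{2i−1} = [x_i; 0; w_i; p^x_i] and h_{2i} = [x_i; y_i; 0_d; p^y_i] (i ∈ [N]) satisfying ‖x_i‖₂ ≤ B_x, |y_i| ≤ B_y and ‖w_i‖₂ ≤ B_w for all i, the output Attn(H) has column 2i−1 equal to [x_i; 0; w̃_i; p^x_i], where w̃_i = w_i − η_i ∇L̂_{i−1}^λ(w_i) with η_i = η(i−1)/(2i−1), and column 2i equal to h_{2i}, for every i ∈ [N]. That is, a single attention layer simultaneously performs one step of gradient descent on the ridge objective at every x-token. -/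
/-!
At the x-token of example `i` (position `2i`, counting from `0`) the layer has to add
`-(η i / (2i + 1)) ∇L̂_i(w_i)` to the `w`-block, so before the normalisation by `1 / (2i + 1)` the
heads must contribute `-η (Σ_{k<i} (⟨w_i, x_k⟩ - y_k) x_k + λ i w_i)`.
Two heads produce the data term: the query reads `w_i`, the key reads `x_k` and `y_k`, and the
value copies `x_k` into the `w`-block. With score signs `±1` and values `∓η` their sum is
`-η (relu t - relu (-t)) x_k = -η t x_k` for `t = ⟨w_i, x_k⟩ - y_k`, while a bias `-R` with
`R ≥ |⟨w_i, x_k⟩|` (Cauchy–Schwarz) switches the x-tokens off.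
The third head reads only positional coordinates; its score is positive only at the query token
itself, where it equals `λ i`, and its value is `-η w_i`. On y-tokens all queries vanish, so the
layer fixes them.
-/

open scoped BigOperators Matrix

noncomputable section

/-- Token format for the in-context gradient-descent layers: the x-token
`2i-1` is `[x_i; yhat_i; w_i; p^x_i]` and the y-token `2i` is
`[x_i; y_i; 0_d; p^y_i]` (0-based `i = t/2`). -/
def gdFormat (Dhid d N : ℕ) (x : ℕ → Fin d → ℝ) (y yhat : ℕ → ℝ)
    (w : ℕ → Fin d → ℝ) : Fin (2*N) → Fin Dhid → ℝ := fun t r =>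
  if h : (r : ℕ) < d then x ((t : ℕ)/2) ⟨(r : ℕ), h⟩
  else if h1 : (r : ℕ) = d then
    (if (t : ℕ) % 2 = 0 then yhat ((t : ℕ)/2) else y ((t : ℕ)/2))
  else if h2 : (r : ℕ) < 2*d + 1 then
    (if (t : ℕ) % 2 = 0 then w ((t : ℕ)/2) ⟨(r : ℕ) - (d + 1), by omega⟩ else 0)
  else if (t : ℕ) % 2 = 0 then posXvec Dhid ((t : ℕ)/2 + 1) r
  else posYvec Dhid ((t : ℕ)/2 + 1) r

/-- The gradient `∇L̂_n^λ(w)` of the ridge empirical risk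
`L̂_n^λ(w) = (1/(2n)) Σ_{j<n}(⟨w,x_j⟩-y_j)² + (λ/2)‖w‖²` over the first `n`
samples, with the convention `L̂_0^λ := 0` (hence gradient `0` for `n = 0`). -/
def ridgeGrad (lam : ℝ) {d : ℕ} (n : ℕ) (x : ℕ → Fin d → ℝ) (y : ℕ → ℝ)
    (w : Fin d → ℝ) : Fin d → ℝ :=
  if n = 0 then 0
  else (1/(n:ℝ)) • (∑ j ∈ Finset.range n, (w ⬝ᵥ x j - y j) • x j) + lam • w

open Matrix Finset

lemma relu_sub_relu_neg (t : ℝ) : relu t - relu (-t) = t := posPart_sub_negPart t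

lemma Fin.sum_Iic_eq_sum_range {β : Type*} [AddCommMonoid β] {M : ℕ} (T : Fin M) (g : ℕ → β) :
    ∑ j ∈ Iic T, g j = ∑ n ∈ range (T + 1), g n := by
  rw [Nat.range_succ_eq_Iic, ← Fin.map_valEmbedding_Iic, sum_map]
  rfl

lemma Finset.sum_range_two_mul_add_one {β : Type*} [AddCommMonoid β] (g : ℕ → β) (i : ℕ) :
    ∑ n ∈ range (2 * i + 1), g n
      = ∑ k ∈ range (i + 1), g (2 * k) + ∑ k ∈ range i, g (2 * k + 1) := by
  induction i with
  | zero => simp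
  | succ i ih =>
    rw [show 2 * (i + 1) + 1 = 2 * i + 1 + 1 + 1 by ring, sum_range_succ, sum_range_succ, ih,
      sum_range_succ _ (i + 1), sum_range_succ (fun k => g (2 * k + 1))]
    abel

lemma l2norm_nonneg {n : ℕ} (v : Fin n → ℝ) : 0 ≤ l2norm v := Real.sqrt_nonneg _

lemma abs_dotProduct_le_l2norm_mul {n : ℕ} (v u : Fin n → ℝ) :
    |v ⬝ᵥ u| ≤ l2norm v * l2norm u := by
  have hneg := Real.sum_mul_le_sqrt_mul_sqrt univ (fun i => -v i) u
  simp only [neg_mul, sum_neg_distrib, neg_sq] at hneg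
  exact abs_le'.mpr ⟨Real.sum_mul_le_sqrt_mul_sqrt univ v u, hneg⟩

lemma single_mulVec_dotProduct {ι α : Type*} [Fintype ι] [DecidableEq ι] [CommSemiring α]
    (a b : ι) (c : α) (h h' : ι → α) :
    (single a b c *ᵥ h) ⬝ᵥ h' = c * h b * h' a := by
  simp [single_mulVec_eq, smul_dotProduct, single_dotProduct]

lemma natCast_smul_ridgeGrad (lam : ℝ) {d : ℕ} (n : ℕ) (x : ℕ → Fin d → ℝ) (y : ℕ → ℝ)
    (w : Fin d → ℝ) :
    (n : ℝ) • ridgeGrad lam n x y w = ∑ j ∈ range n, (w ⬝ᵥ x j - y j) • x j + (lam * n) • w := by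
  rcases eq_or_ne n 0 with rfl | hn
  · simp [ridgeGrad]
  · have hn' : (n : ℝ) ≠ 0 := Nat.cast_ne_zero.mpr hn
    simp [ridgeGrad, hn, hn', smul_add, smul_smul, mul_comm]

namespace AttnHead

variable {D : ℕ}

def aggregate (A : AttnHead D) (G : ℕ → Fin D → ℝ) (t : ℕ) : Fin D → ℝ :=
  ∑ n ∈ range (t + 1), relu ((A.Q *ᵥ G t) ⬝ᵥ (A.K *ᵥ G n)) • (A.V *ᵥ G n)

lemma aggregate_eq_zero_of_query_eq_zero {A : AttnHead D} {G : ℕ → Fin D → ℝ} {t : ℕ}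
    (h : A.Q *ᵥ G t = 0) : A.aggregate G t = 0 := by
  simp [aggregate, h, relu]

end AttnHead

lemma attnLayer_apply_eq_add_sum_aggregate {D Mh M : ℕ} (heads : Fin Mh → AttnHead D)
    (H : Fin M → Fin D → ℝ) (G : ℕ → Fin D → ℝ) (hHG : ∀ j, H j = G j) (t : Fin M) :
    attnLayer heads H t = G t + ∑ m, (1 / ((t : ℝ) + 1)) • (heads m).aggregate G t := by
  simp only [attnLayer, hHG, AttnHead.aggregate, ← Fin.sum_Iic_eq_sum_range]

def tailCoord {D m : ℕ} (h : m ≤ D) (k : Fin m) : Fin D := ⟨D - m + k, by omega⟩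

lemma tailVec_tailCoord {D m : ℕ} (h : m ≤ D) (a : Fin m → ℝ) (k : Fin m) :
    tailVec D a (tailCoord h k) = a k := by
  have hk : (tailCoord h k : ℕ) = D - m + k := rfl
  rw [tailVec, dif_pos (by omega), dif_pos (by omega)]
  simp only [hk]
  congr
  omega

/-- `gdFormat` depends on a token only through its index, so the token with index `n` can be read
off a sequence of length `n + 1`. -/
def gdToken (D d : ℕ) (x : ℕ → Fin d → ℝ) (y : ℕ → ℝ) (w : ℕ → Fin d → ℝ) (n : ℕ) :
    Fin D → ℝ :=
  gdFormat D d (n + 1) x y (fun _ => 0) w ⟨n, by omega⟩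

lemma gdFormat_eq_gdToken {D d N : ℕ} (x : ℕ → Fin d → ℝ) (y : ℕ → ℝ) (w : ℕ → Fin d → ℝ)
    (t : Fin (2 * N)) : gdFormat D d N x y (fun _ => 0) w t = gdToken D d x y w t := rfl

namespace OneStepGD

variable {d D : ℕ} (hD : 2 * d + 9 ≤ D)

def xCoord (s : Fin d) : Fin D := ⟨s, by omega⟩

def yCoord : Fin D := ⟨d, by omega⟩

def wCoord (s : Fin d) : Fin D := ⟨d + 1 + s, by omega⟩

def posCoord (k : Fin 8) : Fin D := tailCoord (by omega) k

def xBlock (h : Fin D → ℝ) : Fin d → ℝ := fun s => h (xCoord hD s)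

def wBlock (h : Fin D → ℝ) : Fin d → ℝ := fun s => h (wCoord hD s)

def wEmbed : (Fin d → ℝ) →ₗ[ℝ] (Fin D → ℝ) :=
  Fintype.linearCombination ℝ fun s => Pi.single (wCoord hD s) 1

lemma wEmbed_apply (v : Fin d → ℝ) (r : Fin D) :
    wEmbed hD v r = if h : d + 1 ≤ r ∧ r < 2 * d + 1 then v ⟨r - (d + 1), by omega⟩ else 0 := by
  simp only [wEmbed, Fintype.linearCombination_apply, Finset.sum_apply, Pi.smul_apply,
    Pi.single_apply, smul_eq_mul, mul_ite, mul_one, mul_zero]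
  split_ifs with h
  · have hr : ∀ s, r = wCoord hD s ↔ s = ⟨r - (d + 1), by omega⟩ := fun s => by
      simp only [Fin.ext_iff, wCoord]
      omega
    simp only [hr, sum_ite_eq', mem_univ, if_true]
  · refine sum_eq_zero fun s _ => if_neg ?_
    rintro rfl
    exact h ⟨by simp [wCoord], by simp [wCoord]; omega⟩

lemma posXvec_posCoord (m : ℕ) (k : Fin 8) :
    posXvec D m (posCoord hD k) =
      ![1, 2 * (m : ℝ) - 1, (2 * (m : ℝ) - 1) ^ 2, (2 * (m : ℝ) - 1) ^ 3, m, (m : ℝ) ^ 2, 1, m] k :=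
  tailVec_tailCoord _ _ k

lemma posYvec_posCoord (m : ℕ) (k : Fin 8) :
    posYvec D m (posCoord hD k) =
      ![1, 2 * (m : ℝ), (2 * (m : ℝ)) ^ 2, (2 * (m : ℝ)) ^ 3, m, (m : ℝ) ^ 2, 0, 0] k :=
  tailVec_tailCoord _ _ k

def gradHead (e R c : ℝ) : AttnHead D where
  Q := ∑ s, single (xCoord hD s) (wCoord hD s) e - single (yCoord hD) (posCoord hD 6) e
    - single (posCoord hD 6) (posCoord hD 6) R
  K := 1
  V := ∑ s, single (wCoord hD s) (xCoord hD s) c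

def ridgeHead (lam c : ℝ) : AttnHead D where
  Q := single (posCoord hD 5) (posCoord hD 6) lam + single (posCoord hD 4) (posCoord hD 6) lam
    - single (posCoord hD 0) (posCoord hD 6) lam - single (posCoord hD 4) (posCoord hD 7) lam
  K := 1
  V := ∑ s, single (wCoord hD s) (wCoord hD s) c

def gdHeads (η lam R : ℝ) : Fin 3 → AttnHead D :=
  ![gradHead hD 1 R (-η), gradHead hD (-1) R η, ridgeHead hD lam (-η)]

lemma gradHead_score (e R c : ℝ) (h h' : Fin D → ℝ) :
    ((gradHead hD e R c).Q *ᵥ h) ⬝ᵥ ((gradHead hD e R c).K *ᵥ h')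
      = e * (wBlock hD h ⬝ᵥ xBlock hD h') - e * h (posCoord hD 6) * h' (yCoord hD)
        - R * h (posCoord hD 6) * h' (posCoord hD 6) := by
  simp only [gradHead, one_mulVec, sub_mulVec, sum_mulVec, sub_dotProduct, sum_dotProduct,
    single_mulVec_dotProduct]
  simp only [dotProduct, wBlock, xBlock, mul_sum, mul_assoc]

lemma gradHead_value (e R c : ℝ) (h : Fin D → ℝ) :
    (gradHead hD e R c).V *ᵥ h = c • wEmbed hD (xBlock hD h) := by
  simp [gradHead, sum_mulVec, single_mulVec_eq, wEmbed, Fintype.linearCombination_apply, xBlock,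
    smul_sum, smul_smul]

lemma gradHead_query_eq_zero (e R c : ℝ) {h : Fin D → ℝ} (hw : wBlock hD h = 0)
    (h6 : h (posCoord hD 6) = 0) : (gradHead hD e R c).Q *ᵥ h = 0 := by
  have hw' : ∀ s, h (wCoord hD s) = 0 := congrFun hw
  simp [gradHead, sub_mulVec, sum_mulVec, single_mulVec_eq, hw', h6]

lemma ridgeHead_score (lam c : ℝ) (h h' : Fin D → ℝ) :
    ((ridgeHead hD lam c).Q *ᵥ h) ⬝ᵥ ((ridgeHead hD lam c).K *ᵥ h')
      = lam * (h (posCoord hD 6) * (h' (posCoord hD 5) + h' (posCoord hD 4) - h' (posCoord hD 0))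
        - h (posCoord hD 7) * h' (posCoord hD 4)) := by
  simp only [ridgeHead, one_mulVec, add_mulVec, sub_mulVec, add_dotProduct, sub_dotProduct,
    single_mulVec_dotProduct]
  ring

lemma ridgeHead_value (lam c : ℝ) (h : Fin D → ℝ) :
    (ridgeHead hD lam c).V *ᵥ h = c • wEmbed hD (wBlock hD h) := by
  simp [ridgeHead, sum_mulVec, single_mulVec_eq, wEmbed, Fintype.linearCombination_apply, wBlock,
    smul_sum, smul_smul]

lemma ridgeHead_query_eq_zero (lam c : ℝ) {h : Fin D → ℝ} (h6 : h (posCoord hD 6) = 0)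
    (h7 : h (posCoord hD 7) = 0) : (ridgeHead hD lam c).Q *ᵥ h = 0 := by
  simp [ridgeHead, add_mulVec, sub_mulVec, single_mulVec_eq, h6, h7]

variable (x : ℕ → Fin d → ℝ) (y : ℕ → ℝ) (w : ℕ → Fin d → ℝ) (n : ℕ)

lemma xBlock_gdToken : xBlock hD (gdToken D d x y w n) = x (n / 2) := by
  ext s
  simp [xBlock, gdToken, gdFormat, xCoord]

lemma wBlock_gdToken :
    wBlock hD (gdToken D d x y w n) = if n % 2 = 0 then w (n / 2) else 0 := by
  ext s
  have hs : (wCoord hD s : ℕ) = d + 1 + s := rfl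
  simp only [wBlock, gdToken, gdFormat]
  rw [dif_neg (by omega), dif_neg (by omega), dif_pos (by omega)]
  split_ifs <;> simp [hs]

lemma gdToken_yCoord :
    gdToken D d x y w n (yCoord hD) = if n % 2 = 0 then 0 else y (n / 2) := by
  simp [gdToken, gdFormat, yCoord]

lemma gdToken_posCoord (k : Fin 8) :
    gdToken D d x y w n (posCoord hD k)
      = if n % 2 = 0 then posXvec D (n / 2 + 1) (posCoord hD k)
        else posYvec D (n / 2 + 1) (posCoord hD k) := by
  have hk : (posCoord hD k : ℕ) = D - 8 + k := rfl
  simp only [gdToken, gdFormat]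
  rw [dif_neg (by omega), dif_neg (by omega), dif_neg (by omega)]

lemma gdToken_two_mul_add_wEmbed (w' : ℕ → Fin d → ℝ) (i : ℕ) (v : Fin d → ℝ)
    (hw' : w' i = w i + v) :
    gdToken D d x y w (2 * i) + wEmbed hD v = gdToken D d x y w' (2 * i) := by
  ext r
  simp only [Pi.add_apply, wEmbed_apply, gdToken, gdFormat]
  split_ifs <;> first | omega | simp [hw']

lemma aggregate_gradHead (e R c : ℝ) (i : ℕ) (hR : ∀ k ≤ i, e * (w i ⬝ᵥ x k) ≤ R) :
    (gradHead hD e R c).aggregate (gdToken D d x y w) (2 * i)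
      = ∑ k ∈ range i, relu (e * (w i ⬝ᵥ x k - y k)) • c • wEmbed hD (x k) := by
  have hq6 : gdToken D d x y w (2 * i) (posCoord hD 6) = 1 := by
    simp [gdToken_posCoord, posXvec_posCoord]
  have hqw : wBlock hD (gdToken D d x y w (2 * i)) = w i := by simp [wBlock_gdToken]
  rw [AttnHead.aggregate, sum_range_two_mul_add_one, sum_eq_zero fun k hk => ?_, zero_add]
  · refine sum_congr rfl fun k _ => ?_
    have hk : (2 * k + 1) / 2 = k := by omega
    rw [gradHead_score, gradHead_value, hqw, hq6, xBlock_gdToken, gdToken_yCoord,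
      gdToken_posCoord, hk]
    simp [posYvec_posCoord, mul_sub]
  · rw [gradHead_score, hqw, hq6, xBlock_gdToken, gdToken_yCoord, gdToken_posCoord,
      relu_of_nonpos, zero_smul]
    simpa [posXvec_posCoord] using hR k (by simpa [Nat.lt_succ_iff] using hk)

lemma aggregate_ridgeHead {lam : ℝ} (hlam : 0 ≤ lam) (c : ℝ) (i : ℕ) :
    (ridgeHead hD lam c).aggregate (gdToken D d x y w) (2 * i)
      = (lam * i) • c • wEmbed hD (w i) := by
  have hscore : ∀ k, ((ridgeHead hD lam c).Q *ᵥ gdToken D d x y w (2 * i)) ⬝ᵥ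
      ((ridgeHead hD lam c).K *ᵥ gdToken D d x y w (2 * k))
        = lam * ((k + 1) * (k + 1 - i) - 1) := fun k => by
    rw [ridgeHead_score]
    congr 1
    simp [gdToken_posCoord, posXvec_posCoord]
    ring
  have hodd : ∀ k, wBlock hD (gdToken D d x y w (2 * k + 1)) = 0 := fun k => by
    simp [wBlock_gdToken]
  rw [AttnHead.aggregate, sum_range_two_mul_add_one, sum_range_succ, sum_eq_zero fun k hk => ?_,
    sum_eq_zero fun k _ => by rw [ridgeHead_value, hodd, map_zero, smul_zero, smul_zero]]
  · rw [hscore, ridgeHead_value, wBlock_gdToken, relu_of_nonneg (by ring_nf; positivity)]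
    simp
  · have hk : (k : ℝ) + 1 ≤ i := by exact_mod_cast mem_range.mp hk
    rw [hscore, relu_of_nonpos (mul_nonpos_of_nonneg_of_nonpos hlam ?_), zero_smul]
    nlinarith

lemma aggregate_gdHeads_two_mul_add_one (η lam R : ℝ) (i : ℕ) (m : Fin 3) :
    (gdHeads hD η lam R m).aggregate (gdToken D d x y w) (2 * i + 1) = 0 := by
  have hw : wBlock hD (gdToken D d x y w (2 * i + 1)) = 0 := by simp [wBlock_gdToken]
  have h6 : gdToken D d x y w (2 * i + 1) (posCoord hD 6) = 0 := by
    simp [gdToken_posCoord, posYvec_posCoord]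
  have h7 : gdToken D d x y w (2 * i + 1) (posCoord hD 7) = 0 := by
    simp [gdToken_posCoord, posYvec_posCoord]
  apply AttnHead.aggregate_eq_zero_of_query_eq_zero
  fin_cases m
  · exact gradHead_query_eq_zero hD _ _ _ hw h6
  · exact gradHead_query_eq_zero hD _ _ _ hw h6
  · exact ridgeHead_query_eq_zero hD _ _ h6 h7

lemma sum_smul_aggregate_gdHeads_two_mul {η lam R : ℝ} (hlam : 0 ≤ lam) (i : ℕ)
    (hR : ∀ k ≤ i, |w i ⬝ᵥ x k| ≤ R) :
    ∑ m, (1 / (((2 * i : ℕ) : ℝ) + 1)) •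
        (gdHeads hD η lam R m).aggregate (gdToken D d x y w) (2 * i)
      = wEmbed hD (-(η / (2 * i + 1)) •
          (∑ k ∈ range i, (w i ⬝ᵥ x k - y k) • x k + (lam * i) • w i)) := by
  have hrelu : ∀ (a : ℝ) (v : Fin D → ℝ),
      relu (1 * a) • (-η) • v + relu (-1 * a) • η • v = -η • a • v := fun a v => by
    simp only [smul_smul, ← add_smul, one_mul, neg_one_mul]
    congr 1
    linear_combination (-η) * relu_sub_relu_neg a
  rw [Fin.sum_univ_three]
  simp only [gdHeads, Matrix.cons_val_zero, Matrix.cons_val_one, Matrix.cons_val_two,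
    Matrix.head_cons, Matrix.tail_cons]
  rw [aggregate_gradHead hD x y w 1 R (-η) i fun k hk => by
      simpa using (le_abs_self _).trans (hR k hk),
    aggregate_gradHead hD x y w (-1) R η i fun k hk => by
      simpa using (neg_le_abs _).trans (hR k hk),
    aggregate_ridgeHead hD x y w hlam (-η) i, ← smul_add, ← sum_add_distrib]
  simp only [hrelu, map_smul, map_add, map_sum, ← smul_sum]
  push_cast
  module

lemma gdToken_add_sum_smul_aggregate_gdHeads_two_mul {η lam R : ℝ} (hlam : 0 ≤ lam) (i : ℕ)
    (hR : ∀ k ≤ i, |w i ⬝ᵥ x k| ≤ R) :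
    gdToken D d x y w (2 * i) + ∑ m, (1 / (((2 * i : ℕ) : ℝ) + 1)) •
        (gdHeads hD η lam R m).aggregate (gdToken D d x y w) (2 * i)
      = gdToken D d x y (fun j => w j - (η * j / (2 * j + 1)) • ridgeGrad lam j x y (w j))
          (2 * i) := by
  rw [sum_smul_aggregate_gdHeads_two_mul hD x y w hlam i hR]
  apply gdToken_two_mul_add_wEmbed
  rw [← natCast_smul_ridgeGrad]
  module

end OneStepGD

/-- **One gradient-descent step by a single attention layer
(Proposition `one-step-gd`).**
For any `η > 0`, `λ ≥ 0`, `B_x, B_w, B_y > 0` and `D_hid ≥ 2d + 10`, there is a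
3-head masked attention layer such that on any input with columns
`h_{2i-1} = [x_i; 0; w_i; p^x_i]`, `h_{2i} = [x_i; y_i; 0_d; p^y_i]` satisfying
the norm bounds, the output column `2i-1` equals `[x_i; 0; w̃_i; p^x_i]` where
`w̃_i = w_i - η_i ∇L̂_{i-1}^λ(w_i)` with `η_i = η (i-1)/(2i-1)`, and the output
column `2i` equals the input column `2i`.  (Tokens are 0-based: token `2i`
below is the math token `2i+1`, with math example index `i+1`.) -/
theorem attention_one_step_gd (d Dhid : ℕ) (η lam Bx Bw By : ℝ)
    (hlam : 0 ≤ lam)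
    (hDhid : 2*d + 10 ≤ Dhid) :
    ∃ heads : Fin 3 → AttnHead Dhid,
      ∀ (N : ℕ) (x w : ℕ → Fin d → ℝ) (y : ℕ → ℝ),
        (∀ i < N, l2norm (x i) ≤ Bx) →
        (∀ i < N, |y i| ≤ By) →
        (∀ i < N, l2norm (w i) ≤ Bw) →
        ∀ i : Fin N,
          (∀ r : Fin Dhid,
            attnLayer heads (gdFormat Dhid d N x y (fun _ => 0) w)
                ⟨2*(i : ℕ), by have := i.2; omega⟩ r
              = gdFormat Dhid d N x y (fun _ => 0)
                  (fun j => w j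
                    - (η * (j : ℝ) / (2*(j : ℝ) + 1)) • ridgeGrad lam j x y (w j))
                  ⟨2*(i : ℕ), by have := i.2; omega⟩ r) ∧
          (∀ r : Fin Dhid,
            attnLayer heads (gdFormat Dhid d N x y (fun _ => 0) w)
                ⟨2*(i : ℕ) + 1, by have := i.2; omega⟩ r
              = gdFormat Dhid d N x y (fun _ => 0) w
                  ⟨2*(i : ℕ) + 1, by have := i.2; omega⟩ r) := by
  have hD : 2 * d + 9 ≤ Dhid := by omega
  refine ⟨OneStepGD.gdHeads hD η lam (Bw * Bx), fun N x w y hx _ hw i =>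
    ⟨fun r => ?_, fun r => ?_⟩⟩
  all_goals rw [attnLayer_apply_eq_add_sum_aggregate _ _ _ (gdFormat_eq_gdToken x y w),
    gdFormat_eq_gdToken]
  · have hR : ∀ k ≤ (i : ℕ), |w i ⬝ᵥ x k| ≤ Bw * Bx := fun k hk =>
      (abs_dotProduct_le_l2norm_mul _ _).trans <| mul_le_mul (hw i i.2) (hx k (by omega))
        (l2norm_nonneg _) ((l2norm_nonneg _).trans (hw i i.2))
    exact congrFun
      (OneStepGD.gdToken_add_sum_smul_aggregate_gdHeads_two_mul hD x y w hlam i hR) r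
  · simp [OneStepGD.aggregate_gdHeads_two_mul_add_one]

end
end

section
/- Suppose D_hid ≥ kd + 4. For any k ≥ 1, there exists a masked attention layer with k+1 heads such that for every N ≥ k and every input H ∈ ℝ^{D_hid×N} of the dynamical input format, the output Attn(H) has i-th column equal to [x̄_i; p̄_i] = [x_{i−k+1}; …; x_{i−1}; x_i; p̄_i] for all i ∈ [N], where p̄_i differs from p_i only in the dimension of its zero padding; that is, the layer copies the k−1 previous tokens x_{i−k+1}, …, x_{i−1} onto the i-th token (with the convention x_j := 0_d for j ≤ 0). -/
open scoped BigOperators Matrix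

noncomputable section

/-- The positional encoding `p_i` of the dynamical input format (math index `i`):
zero padding followed by `[1; i; i²; i³]`. -/
def dynPos (Dhid : ℕ) (i : ℕ) : Fin Dhid → ℝ :=
  tailVec Dhid ![1, (i:ℝ), (i:ℝ)^2, (i:ℝ)^3]

/-- The dynamical input format: column `i` (0-based) is `[x_i; p_{i+1}]`. -/
def dynInput (Dhid d N : ℕ) (x : ℕ → Fin d → ℝ) : Fin N → Fin Dhid → ℝ :=
  fun i r =>
    if h : (r : ℕ) < d then x (i : ℕ) ⟨(r : ℕ), h⟩ else dynPos Dhid ((i : ℕ) + 1) r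

/-- The concatenation `x̄_i = [x_{i-k+1}; …; x_i] ∈ ℝ^{kd}` (0-based `i`), with
the convention that out-of-range (i.e. negative-index) entries are `0`. -/
def xbar (k d : ℕ) (x : ℕ → Fin d → ℝ) (i : ℕ) : Fin (k*d) → ℝ := fun r =>
  if h : k ≤ i + (r : ℕ)/d + 1 ∧ (r : ℕ) % d < d then
    x (i + (r : ℕ)/d + 1 - k) ⟨(r : ℕ) % d, h.2⟩
  else 0

/-- The dynamical format after copying: column `i` is `[x̄_i; p̄_{i+1}]`. -/
def dynCopied (Dhid k d N : ℕ) (x : ℕ → Fin d → ℝ) : Fin N → Fin Dhid → ℝ :=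
  fun i r =>
    if h : (r : ℕ) < k*d then xbar k d x (i : ℕ) ⟨(r : ℕ), h⟩
    else dynPos Dhid ((i : ℕ) + 1) r

/-!
Write the hidden dimension as `n + 4`, so that the positional block `[1; t; t²; t³]` of token
`t = i + 1` sits in the last four coordinates. A bilinear form on that block realises the score
`t (1 - (t - u - s)²)` between tokens `t` and `u`; for integers this is positive only when
`u = t - s`, where it equals `t`, so after the ReLU and the `1/t` normalisation the head with
shift `s` reads off exactly the token `t - s`. Heads with shifts `0, …, k-1` write `x_{t-s}`
into block `k-1-s` of the output, and one more head with shift `0` subtracts the residual copy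
of `x_t` from block `0`.
-/

open Matrix Finset

def tailForm (n : ℕ) {m : ℕ} (C : Matrix (Fin m) (Fin m) ℝ) :
    Matrix (Fin (n + m)) (Fin (n + m)) ℝ :=
  ∑ a, ∑ b, single (Fin.natAdd n a) (Fin.natAdd n b) (C a b)

theorem dotProduct_tailForm_mulVec (n : ℕ) {m : ℕ} (C : Matrix (Fin m) (Fin m) ℝ)
    (v w : Fin (n + m) → ℝ) :
    v ⬝ᵥ (tailForm n C *ᵥ w) = ∑ a, ∑ b, C a b * v (Fin.natAdd n a) * w (Fin.natAdd n b) := by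
  simp only [tailForm, sum_mulVec, dotProduct_sum, single_mulVec, ← Pi.single.eq_def,
    dotProduct_single]
  exact sum_congr rfl fun a _ => sum_congr rfl fun b _ => by ring

theorem dynPos_natAdd (n t : ℕ) (a : Fin 4) :
    dynPos (n + 4) t (Fin.natAdd n a) = (t : ℝ) ^ (a : ℕ) := by
  rw [dynPos, tailVec, dif_pos (by simp), dif_pos (by simp)]
  fin_cases a <;> simp

theorem dynPos_apply_eq_zero {Dhid : ℕ} (t : ℕ) (r : Fin Dhid) (hr : (r : ℕ) + 4 < Dhid) :
    dynPos Dhid t r = 0 :=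
  dif_neg (by omega)

theorem dynInput_natAdd {n d N : ℕ} (hd : d ≤ n) (x : ℕ → Fin d → ℝ) (i : Fin N) (a : Fin 4) :
    dynInput (n + 4) d N x i (Fin.natAdd n a) = ((i : ℝ) + 1) ^ (a : ℕ) := by
  rw [dynInput, dif_neg (by simp; omega), dynPos_natAdd]
  push_cast
  rfl

/-- Coefficients of `t (1 - (t - u - s)²)` in the monomials `tᵃ uᵇ`. -/
def shiftScore (s : ℕ) : Matrix (Fin 4) (Fin 4) ℝ :=
  !![0, 0, 0, 0; 1 - (s : ℝ) ^ 2, -2 * s, -1, 0; 2 * s, 2, 0, 0; -1, 0, 0, 0]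

theorem sum_shiftScore_mul_pow (s : ℕ) (t u : ℝ) :
    ∑ a, ∑ b, shiftScore s a b * t ^ (a : ℕ) * u ^ (b : ℕ) = t * (1 - (t - u - s) ^ 2) := by
  simp [Fin.sum_univ_four, shiftScore]
  ring

theorem relu_mul_one_sub_intCast_sq {t : ℝ} (ht : 0 ≤ t) (z : ℤ) :
    relu (t * (1 - (z : ℝ) ^ 2)) = if z = 0 then t else 0 := by
  split_ifs with hz
  · simp [hz, relu, ht]
  · have : (1 : ℝ) ≤ (z : ℝ) ^ 2 := mod_cast (one_le_sq_iff_one_le_abs _).mpr (Int.one_le_abs hz)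
    exact max_eq_right (mul_nonpos_of_nonneg_of_nonpos ht (by linarith))

theorem smul_sum_Iic_ite_smul {E : Type*} [AddCommGroup E] [Module ℝ E] {N : ℕ}
    (f : Fin N → E) (i : Fin N) (s : ℕ) :
    (1 / ((i : ℝ) + 1)) • ∑ j ∈ Iic i, (if (j : ℕ) + s = i then (i : ℝ) + 1 else 0) • f j
      = if h : s ≤ (i : ℕ) then f ⟨(i : ℕ) - s, by omega⟩ else 0 := by
  simp only [ite_smul, zero_smul]
  split_ifs with hs
  · have hj : ∀ j : Fin N, (j : ℕ) + s = i ↔ j = ⟨(i : ℕ) - s, by omega⟩ := fun j => by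
      simp only [Fin.ext_iff]; omega
    simp only [hj, sum_ite_eq', mem_Iic, Fin.le_def, tsub_le_self, if_true, smul_smul]
    rw [one_div_mul_cancel (by positivity), one_smul]
  · rw [sum_eq_zero fun j _ => if_neg (by omega), smul_zero]

def shiftHead (n s : ℕ) (V : Matrix (Fin (n + 4)) (Fin (n + 4)) ℝ) : AttnHead (n + 4) :=
  ⟨1, tailForm n (shiftScore s), V⟩

theorem relu_shiftHead_score {n d N : ℕ} (hd : d ≤ n) (x : ℕ → Fin d → ℝ) (s : ℕ)
    (V : Matrix (Fin (n + 4)) (Fin (n + 4)) ℝ) (i j : Fin N) :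
    relu (((shiftHead n s V).Q *ᵥ dynInput (n + 4) d N x i) ⬝ᵥ
        ((shiftHead n s V).K *ᵥ dynInput (n + 4) d N x j))
      = if (j : ℕ) + s = i then (i : ℝ) + 1 else 0 := by
  simp only [shiftHead, one_mulVec, dotProduct_tailForm_mulVec, dynInput_natAdd hd,
    sum_shiftScore_mul_pow]
  have hz : ((i : ℝ) + 1) - ((j : ℝ) + 1) - s = (((i : ℤ) - j - s : ℤ) : ℝ) := by
    push_cast; ring
  rw [hz, relu_mul_one_sub_intCast_sq (by positivity)]
  exact if_congr (by omega) rfl rfl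

theorem shiftHead_output {n d N : ℕ} (hd : d ≤ n) (x : ℕ → Fin d → ℝ) (s : ℕ)
    (V : Matrix (Fin (n + 4)) (Fin (n + 4)) ℝ) (i : Fin N) :
    (1 / ((i : ℝ) + 1)) • ∑ j ∈ Iic i,
        relu (((shiftHead n s V).Q *ᵥ dynInput (n + 4) d N x i) ⬝ᵥ
          ((shiftHead n s V).K *ᵥ dynInput (n + 4) d N x j)) •
          ((shiftHead n s V).V *ᵥ dynInput (n + 4) d N x j)
      = if h : s ≤ i then V *ᵥ dynInput (n + 4) d N x ⟨i - s, by omega⟩ else 0 := by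
  simp only [relu_shiftHead_score hd]
  exact smul_sum_Iic_ite_smul (fun j => V *ᵥ dynInput (n + 4) d N x j) i s

/-- `blockCopy D d b *ᵥ v` writes the first `d` coordinates of `v` into the `b`-th block of `d`
consecutive coordinates, and is zero elsewhere. -/
def blockCopy (D d b : ℕ) : Matrix (Fin D) (Fin D) ℝ :=
  of fun r => if 0 < d ∧ (r : ℕ) / d = b then
    Pi.single ⟨r % d, (Nat.mod_le _ _).trans_lt r.isLt⟩ 1 else 0

theorem blockCopy_mulVec_dynInput {Dhid d N : ℕ} (b : ℕ) (x : ℕ → Fin d → ℝ) (j : Fin N)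
    (r : Fin Dhid) :
    (blockCopy Dhid d b *ᵥ dynInput Dhid d N x j) r
      = if h : 0 < d ∧ (r : ℕ) / d = b then x j ⟨r % d, Nat.mod_lt _ h.1⟩ else 0 := by
  simp only [mulVec, blockCopy, of_apply]
  split_ifs with h
  · rw [single_dotProduct, one_mul, dynInput, dif_pos (Nat.mod_lt _ h.1)]
  · exact zero_dotProduct _

theorem dynInput_sub_blockCopy_zero {n k d N : ℕ} (hk : 1 ≤ k) (hkd : k * d ≤ n)
    (x : ℕ → Fin d → ℝ) (i : Fin N) :
    dynInput (n + 4) d N x i - blockCopy (n + 4) d 0 *ᵥ dynInput (n + 4) d N x i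
      = fun r : Fin (n + 4) => if (r : ℕ) < k * d then 0 else dynPos (n + 4) (i + 1) r := by
  have hdk : d ≤ k * d := Nat.le_mul_of_pos_left d hk
  funext r
  rw [Pi.sub_apply, blockCopy_mulVec_dynInput]
  by_cases hrd : (r : ℕ) < d
  · have hpos : 0 < d := by omega
    rw [dif_pos ⟨hpos, Nat.div_eq_of_lt hrd⟩, if_pos (by omega), dynInput, dif_pos hrd]
    simp [Nat.mod_eq_of_lt hrd]
  · rw [dif_neg fun h => hrd (Nat.lt_of_div_eq_zero h.1 h.2), sub_zero, dynInput, dif_neg hrd]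
    split_ifs with hr
    · exact dynPos_apply_eq_zero _ _ (by omega)
    · rfl

theorem sum_blockCopy_rev_eq_xbar {n k d N : ℕ} (x : ℕ → Fin d → ℝ) (i : Fin N) :
    ∑ m : Fin k, (if h : (m : ℕ) ≤ i then
        blockCopy (n + 4) d m.rev *ᵥ dynInput (n + 4) d N x ⟨i - m, by omega⟩ else 0)
      = fun r : Fin (n + 4) => if h : (r : ℕ) < k * d then xbar k d x i ⟨r, h⟩ else 0 := by
  funext r
  simp only [Finset.sum_apply, dite_apply, Pi.zero_apply, blockCopy_mulVec_dynInput]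
  split_ifs with hr
  · have hpos : 0 < d := Nat.pos_of_ne_zero fun h => by simp [h] at hr
    obtain ⟨q, hqr⟩ : ∃ q, (r : ℕ) / d = q := ⟨_, rfl⟩
    have hq : q < k := hqr ▸ (Nat.div_lt_iff_lt_mul hpos).mpr hr
    rw [sum_eq_single (Fin.rev ⟨q, hq⟩), xbar]
    · simp only [Fin.val_rev, hqr, hpos, Nat.mod_lt _ hpos, true_and, and_true]
      split_ifs <;> first | (exfalso; omega) | (congr 1; omega) | rfl
    · intro m _ hm
      split_ifs with _ hblock
      · rw [hqr] at hblock
        exact (hm (Fin.ext (by simp only [Fin.val_rev] at hblock ⊢; omega))).elim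
      all_goals rfl
    · simp
  · refine sum_eq_zero fun m _ => ?_
    split_ifs with _ hblock
    · have : k ≤ (r : ℕ) / d := (Nat.le_div_iff_mul_le hblock.1).mpr (by omega)
      omega
    all_goals rfl

/-- **Copying for dynamical systems (Lemma `copy-dynamic`).**
Suppose `D_hid ≥ kd + 4`.  For any `k ≥ 1` there is a masked attention layer
with `k+1` heads such that for every `N ≥ k` and every dynamical-format input,
the output column `i` equals `[x̄_i; p̄_i] = [x_{i-k+1}; …; x_{i-1}; x_i; p̄_i]`,
i.e. the layer copies the `k-1` previous tokens onto the `i`-th token (with the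
convention `x_j := 0` for out-of-range `j`). -/
theorem attention_copy_dynamical (k d Dhid : ℕ) (hk : 1 ≤ k)
    (hDhid : k*d + 4 ≤ Dhid) :
    ∃ heads : Fin (k+1) → AttnHead Dhid,
      ∀ N : ℕ, k ≤ N →
        ∀ x : ℕ → Fin d → ℝ,
          attnLayer heads (dynInput Dhid d N x) = dynCopied Dhid k d N x := by
  obtain ⟨n, rfl⟩ := Nat.exists_eq_add_of_le' (le_of_add_le_right hDhid)
  have hkd : k * d ≤ n := by omega
  have hd : d ≤ n := (Nat.le_mul_of_pos_left d hk).trans hkd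
  refine ⟨Fin.cons (shiftHead n 0 (-blockCopy (n + 4) d 0))
    fun m : Fin k => shiftHead n m (blockCopy (n + 4) d m.rev), fun N _ x => funext fun i => ?_⟩
  simp only [attnLayer, Fin.sum_univ_succ, Fin.cons_zero, Fin.cons_succ, shiftHead_output hd,
    dif_pos (Nat.zero_le _), Nat.sub_zero, Fin.eta, neg_mulVec, ← add_assoc, ← sub_eq_add_neg,
    dynInput_sub_blockCopy_zero hk hkd, sum_blockCopy_rev_eq_xbar]
  funext r
  simp only [Pi.add_apply, dynCopied]
  split_ifs <;> simp
end
end
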